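/- Trajectory convergence (part of Theorem 2.3): Under assumptions (H1) and (H2), let x : [0, ∞) → ℝ^n be continuously differentiable with x(t) ∈ S and ẋ(t) = F(x(t)) for all t ≥ 0. Then the function t ↦ θ(x(t)) is nonincreasing, the trajectory {x(t) : t ≥ 0} is bounded, the limit l := lim_{t→∞} θ(x(t)) exists, and every accumulation point of x(t) as t → ∞ belongs to Φ ∩ {x ∈ S : θ(x) = l}. -/

import Mathlib

/-!
Along the flow, `d/dt θ(x(t)) = ∇θ·F` equals
`−|M∇θ|²_{R₁} − |diag(g) v|²_{R₂} + Σ a_j g_j v_j² − Σ (b_j + c_j (v_j⁺)^{2p_j}) (v_j⁺)²`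
with `M = H − PᵀQP`, a sum of nonpositive terms on `S`. Hence `θ(x(t))` decreases, the
trajectory stays in a compact sublevel set (H1), and `θ(x(t))` converges. By (H2), `Q` is
positive definite on `S`, so `F` is continuous there and bounded on that compact set, which makes
`x` Lipschitz. At an accumulation point `y` the rate `∇θ(y)·F(y)` must vanish, since otherwise
`θ` would drop by a fixed amount on infinitely many disjoint time intervals. The four terms then
vanish separately: `M∇θ = 0`, `v ≤ 0` and `g_j v_j = 0`, which are the KKT conditions with
`μ = −v` and `λ` read off from `∇θ − Bᵀv ∈ range Aᵀ`.
-/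

open Matrix Set Filter

noncomputable section

/-- The gradient of `f : ℝⁿ → ℝ` at `x`, as the vector of partial derivatives. -/
def grad {n : ℕ} (f : (Fin n → ℝ) → ℝ) (x : Fin n → ℝ) : Fin n → ℝ :=
  fun j => fderiv ℝ f x (Pi.single j 1)

/-- The feasible set `S`. -/
def feas {n m k : ℕ} (h : Fin m → (Fin n → ℝ) → ℝ) (g : Fin k → (Fin n → ℝ) → ℝ) :
    Set (Fin n → ℝ) :=
  {x | (∀ i, h i x = 0) ∧ (∀ j, g j x ≤ 0)}

/-- Jacobian of the equality constraints (rows `∇h_i(x)`). -/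
def matA {n m : ℕ} (h : Fin m → (Fin n → ℝ) → ℝ) (x : Fin n → ℝ) :
    Matrix (Fin m) (Fin n) ℝ :=
  Matrix.of fun i => grad (h i) x

/-- Jacobian of the inequality constraints (rows `∇g_j(x)`). -/
def matB {n k : ℕ} (g : Fin k → (Fin n → ℝ) → ℝ) (x : Fin n → ℝ) :
    Matrix (Fin k) (Fin n) ℝ :=
  Matrix.of fun j => grad (g j) x

/-- `H(x) = I − Aᵀ(AAᵀ)⁻¹A`. -/
def matH {n m : ℕ} (h : Fin m → (Fin n → ℝ) → ℝ) (x : Fin n → ℝ) :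
    Matrix (Fin n) (Fin n) ℝ :=
  1 - (matA h x)ᵀ * (matA h x * (matA h x)ᵀ)⁻¹ * matA h x

/-- `Q(x) = B(x)H(x)B(x)ᵀ − diag(g(x))`. -/
def matQ {n m k : ℕ} (h : Fin m → (Fin n → ℝ) → ℝ) (g : Fin k → (Fin n → ℝ) → ℝ)
    (x : Fin n → ℝ) : Matrix (Fin k) (Fin k) ℝ :=
  matB g x * matH h x * (matB g x)ᵀ - Matrix.diagonal (fun j => g j x)

/-- Assumption (H1). -/
def hypH1 {n m k : ℕ} (θ : (Fin n → ℝ) → ℝ) (h : Fin m → (Fin n → ℝ) → ℝ)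
    (g : Fin k → (Fin n → ℝ) → ℝ) : Prop :=
  (feas h g).Nonempty ∧ ∀ x₀ ∈ feas h g, IsCompact {x ∈ feas h g | θ x ≤ θ x₀}

/-- Assumption (H2). -/
def hypH2 {n m k : ℕ} (h : Fin m → (Fin n → ℝ) → ℝ) (g : Fin k → (Fin n → ℝ) → ℝ) : Prop :=
  ∀ x ∈ feas h g,
    LinearIndependent ℝ
      (Sum.elim (fun i : Fin m => grad (h i) x)
        (fun j : {j : Fin k // g j x = 0} => grad (g (j : Fin k)) x))

/-- `P(x) = Q(x)⁻¹ B(x) H(x)`. -/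
def matP {n m k : ℕ} (h : Fin m → (Fin n → ℝ) → ℝ) (g : Fin k → (Fin n → ℝ) → ℝ)
    (x : Fin n → ℝ) : Matrix (Fin k) (Fin n) ℝ :=
  (matQ h g x)⁻¹ * matB g x * matH h x

/-- `v(x) = P(x)(∇θ(x))ᵀ`. -/
def vecv {n m k : ℕ} (θ : (Fin n → ℝ) → ℝ) (h : Fin m → (Fin n → ℝ) → ℝ)
    (g : Fin k → (Fin n → ℝ) → ℝ) (x : Fin n → ℝ) : Fin k → ℝ :=
  (matP h g x).mulVec (grad θ x)

/-- componentwise positive part. -/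
def pPart {k : ℕ} (w : Fin k → ℝ) : Fin k → ℝ := fun j => max 0 (w j)

/-- `R₃(x)`. -/
def matR3 {n k : ℕ} (b c : Fin k → (Fin n → ℝ) → ℝ) (p : Fin k → ℕ) (x : Fin n → ℝ)
    (v : Fin k → ℝ) : Matrix (Fin k) (Fin k) ℝ :=
  Matrix.diagonal (fun j => b j x + c j x * (max 0 (v j)) ^ (2 * p j))

/-- The vector field `F(x)` of (2.4), (2.5). -/
def vecF {n m k : ℕ} (θ : (Fin n → ℝ) → ℝ) (h : Fin m → (Fin n → ℝ) → ℝ)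
    (g : Fin k → (Fin n → ℝ) → ℝ)
    (R1 : (Fin n → ℝ) → Matrix (Fin n) (Fin n) ℝ)
    (R2 : (Fin n → ℝ) → Matrix (Fin k) (Fin k) ℝ)
    (a b c : Fin k → (Fin n → ℝ) → ℝ) (p : Fin k → ℕ) (x : Fin n → ℝ) : Fin n → ℝ :=
  -(((matH h x - (matP h g x)ᵀ * matQ h g x * matP h g x) * R1 x *
      (matH h x - (matP h g x)ᵀ * matQ h g x * matP h g x)).mulVec (grad θ x))
  - ((matP h g x)ᵀ * Matrix.diagonal (fun j => g j x) *
      (R2 x * Matrix.diagonal (fun j => g j x) - Matrix.diagonal (fun j => a j x))).mulVec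
        (vecv θ h g x)
  - ((matP h g x)ᵀ * matR3 b c p x (vecv θ h g x)).mulVec (pPart (vecv θ h g x))

/-- The set `Φ` of KKT points. -/
def KKTset {n m k : ℕ} (θ : (Fin n → ℝ) → ℝ) (h : Fin m → (Fin n → ℝ) → ℝ)
    (g : Fin k → (Fin n → ℝ) → ℝ) : Set (Fin n → ℝ) :=
  {x | x ∈ feas h g ∧ ∃ (lam : Fin m → ℝ) (mu : Fin k → ℝ),
    (∀ j, 0 ≤ mu j) ∧
    grad θ x + (∑ i, lam i • grad (h i) x) + (∑ j, mu j • grad (g j) x) = 0 ∧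
    (∑ j, mu j * g j x) = 0}

namespace Matrix

variable {ι κ : Type*} [Fintype ι] [Fintype κ]

theorem posDef_mul_transpose_of_linearIndependent {A : Matrix ι κ ℝ}
    (hA : LinearIndependent ℝ A.row) : (A * Aᵀ).PosDef := by
  simpa [conjTranspose_eq_transpose_of_trivial] using
    PosDef.mul_conjTranspose_self A (vecMul_injective_iff.2 hA)

theorem PosDef.eq_zero_of_dotProduct_mulVec_self_eq_zero {M : Matrix ι ι ℝ} (hM : M.PosDef)
    {x : ι → ℝ} (hx : x ⬝ᵥ (M *ᵥ x) = 0) : x = 0 :=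
  by_contra fun hx0 => (hM.dotProduct_mulVec_pos hx0).ne' hx

variable [DecidableEq ι] [DecidableEq κ] (A : Matrix ι κ ℝ)

theorem transpose_one_sub_transpose_mul_inv_mul :
    (1 - Aᵀ * (A * Aᵀ)⁻¹ * A)ᵀ = 1 - Aᵀ * (A * Aᵀ)⁻¹ * A := by
  rw [transpose_sub, transpose_one, transpose_mul, transpose_mul, transpose_transpose,
    transpose_nonsing_inv, transpose_mul, transpose_transpose, Matrix.mul_assoc]

theorem one_sub_transpose_mul_inv_mul_mulVec (v : κ → ℝ) :
    (1 - Aᵀ * (A * Aᵀ)⁻¹ * A) *ᵥ v = v - Aᵀ *ᵥ ((A * Aᵀ)⁻¹ *ᵥ (A *ᵥ v)) := by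
  rw [sub_mulVec, one_mulVec, mulVec_mulVec, mulVec_mulVec]

variable {A}

theorem one_sub_transpose_mul_inv_mul_mul_transpose (hA : IsUnit (A * Aᵀ).det) :
    (1 - Aᵀ * (A * Aᵀ)⁻¹ * A) * Aᵀ = 0 := by
  rw [Matrix.sub_mul, Matrix.one_mul, Matrix.mul_assoc _ A, Matrix.mul_assoc Aᵀ,
    nonsing_inv_mul _ hA, Matrix.mul_one, sub_self]

theorem isIdempotentElem_one_sub_transpose_mul_inv_mul (hA : IsUnit (A * Aᵀ).det) :
    IsIdempotentElem (1 - Aᵀ * (A * Aᵀ)⁻¹ * A) := by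
  rw [IsIdempotentElem, Matrix.mul_sub, Matrix.mul_one, ← Matrix.mul_assoc,
    ← Matrix.mul_assoc, one_sub_transpose_mul_inv_mul_mul_transpose hA, Matrix.zero_mul,
    Matrix.zero_mul, sub_zero]

end Matrix

section Gradient

variable {n : ℕ}

theorem grad_dotProduct (f : (Fin n → ℝ) → ℝ) (x v : Fin n → ℝ) :
    grad f x ⬝ᵥ v = fderiv ℝ f x v := by
  conv_rhs => rw [pi_eq_sum_univ v, map_sum]
  refine Finset.sum_congr rfl fun j _ => ?_
  rw [map_smul, smul_eq_mul, mul_comm, grad]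
  congr 3
  ext i
  simp [Pi.single_apply, eq_comm]

theorem HasDerivAt.comp_grad {f : (Fin n → ℝ) → ℝ} {x : ℝ → Fin n → ℝ} {v : Fin n → ℝ} {t : ℝ}
    (hf : DifferentiableAt ℝ f (x t)) (hx : HasDerivAt x v t) :
    HasDerivAt (fun s => f (x s)) (grad f (x t) ⬝ᵥ v) t := by
  rw [grad_dotProduct]
  exact hf.hasFDerivAt.comp_hasDerivAt t hx

theorem continuous_grad {f : (Fin n → ℝ) → ℝ} (hf : ContDiff ℝ 1 f) : Continuous (grad f) :=
  continuous_pi fun _ => (hf.continuous_fderiv one_ne_zero).clm_apply continuous_const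

end Gradient

section Constraints

variable {n m k : ℕ} {h : Fin m → (Fin n → ℝ) → ℝ} {g : Fin k → (Fin n → ℝ) → ℝ}
  {y : Fin n → ℝ}

theorem matH_transpose (h : Fin m → (Fin n → ℝ) → ℝ) (y : Fin n → ℝ) :
    (matH h y)ᵀ = matH h y :=
  Matrix.transpose_one_sub_transpose_mul_inv_mul _

theorem matQ_transpose (h : Fin m → (Fin n → ℝ) → ℝ) (g : Fin k → (Fin n → ℝ) → ℝ)
    (y : Fin n → ℝ) : (matQ h g y)ᵀ = matQ h g y := by
  rw [matQ, transpose_sub, diagonal_transpose, transpose_mul, transpose_mul,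
    transpose_transpose, matH_transpose, Matrix.mul_assoc]

theorem dotProduct_matQ_mulVec (hdA : IsUnit (matA h y * (matA h y)ᵀ).det) (z : Fin k → ℝ) :
    z ⬝ᵥ (matQ h g y *ᵥ z) = (matH h y *ᵥ ((matB g y)ᵀ *ᵥ z)) ⬝ᵥ (matH h y *ᵥ ((matB g y)ᵀ *ᵥ z))
      + ∑ j, -g j y * z j ^ 2 := by
  have hH : matH h y * matH h y = matH h y :=
    Matrix.isIdempotentElem_one_sub_transpose_mul_inv_mul hdA
  have hquad : ∀ w, w ⬝ᵥ (matH h y *ᵥ w) = (matH h y *ᵥ w) ⬝ᵥ (matH h y *ᵥ w) := fun w => by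
    conv_lhs => rw [← hH, ← mulVec_mulVec, dotProduct_mulVec, ← mulVec_transpose, matH_transpose]
  rw [matQ, sub_mulVec, dotProduct_sub, ← mulVec_mulVec, ← mulVec_mulVec, dotProduct_mulVec,
    ← mulVec_transpose, hquad, sub_eq_add_neg]
  congr 1
  rw [dotProduct, ← Finset.sum_neg_distrib]
  refine Finset.sum_congr rfl fun j _ => ?_
  rw [mulVec_diagonal]
  ring

theorem matA_transpose_mulVec (w : Fin m → ℝ) :
    (matA h y)ᵀ *ᵥ w = ∑ i, w i • grad (h i) y := by
  rw [mulVec_transpose, vecMul_eq_sum]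
  rfl

theorem matB_transpose_mulVec (z : Fin k → ℝ) :
    (matB g y)ᵀ *ᵥ z = ∑ j, z j • grad (g j) y := by
  rw [mulVec_transpose, vecMul_eq_sum]
  rfl

variable (hli : LinearIndependent ℝ
  (Sum.elim (fun i : Fin m => grad (h i) y) (fun j : {j : Fin k // g j y = 0} => grad (g j) y)))
include hli

theorem isUnit_det_matA_mul_transpose : IsUnit (matA h y * (matA h y)ᵀ).det :=
  isUnit_iff_ne_zero.2 (Matrix.posDef_mul_transpose_of_linearIndependent (A := matA h y)
    (hli.comp Sum.inl Sum.inl_injective)).det_pos.ne'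

theorem eq_zero_of_transpose_mulVec_add_eq_zero {w : Fin m → ℝ} {z : Fin k → ℝ}
    (hz : ∀ j, g j y ≠ 0 → z j = 0) (hwz : (matA h y)ᵀ *ᵥ w + (matB g y)ᵀ *ᵥ z = 0) :
    z = 0 := by
  classical
  have hB : (matB g y)ᵀ *ᵥ z = ∑ j : {j : Fin k // g j y = 0}, z j • grad (g j) y := by
    rw [matB_transpose_mulVec, ← Fintype.sum_subtype_add_sum_subtype (g · y = 0),
      Fintype.sum_eq_zero (fun j : {j // ¬g j y = 0} => _) fun j => by simp [hz j j.2],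
      add_zero]
  have hcomb := Fintype.linearIndependent_iff.1 hli (Sum.elim w fun j => z j) <| by
    rw [Fintype.sum_sum_type, ← hwz, hB, matA_transpose_mulVec]
    rfl
  ext j
  by_cases hj : g j y = 0
  · exact hcomb (Sum.inr ⟨j, hj⟩)
  · exact hz j hj

/-- If `zᵀQz = |HBᵀz|² + Σ (−g_j) z_j²` vanishes, then `z` lives on the active constraints and
`Bᵀz ∈ range Aᵀ`, which (H2) rules out unless `z = 0`. -/
theorem matQ_posDef (hy : y ∈ feas h g) : (matQ h g y).PosDef := by
  refine .of_dotProduct_mulVec_pos (isHermitian_iff_isSymm.2 (matQ_transpose h g y)) fun z hz => ?_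
  rw [star_trivial, dotProduct_matQ_mulVec (isUnit_det_matA_mul_transpose hli)]
  set u := matH h y *ᵥ ((matB g y)ᵀ *ᵥ z)
  have hu0 : 0 ≤ u ⬝ᵥ u := dotProduct_self_star_nonneg u
  have hg : ∀ j ∈ Finset.univ, 0 ≤ -g j y * z j ^ 2 := fun j _ =>
    mul_nonneg (neg_nonneg.2 (hy.2 j)) (sq_nonneg _)
  have hg0 := Finset.sum_nonneg hg
  refine lt_of_le_of_ne (add_nonneg hu0 hg0) fun h0 => hz ?_
  have hu : u = 0 := dotProduct_self_eq_zero.1 (by linarith)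
  have hinactive : ∀ j, g j y ≠ 0 → z j = 0 := fun j hj => by
    have := (Finset.sum_eq_zero_iff_of_nonneg hg).1 (by linarith) j (Finset.mem_univ j)
    simpa [hj] using this
  refine eq_zero_of_transpose_mulVec_add_eq_zero hli hinactive
    (w := -((matA h y * (matA h y)ᵀ)⁻¹ *ᵥ (matA h y *ᵥ ((matB g y)ᵀ *ᵥ z)))) ?_
  rw [mulVec_neg, neg_add_eq_sub, ← Matrix.one_sub_transpose_mul_inv_mul_mulVec]
  exact hu

end Constraints

theorem nonpos_of_mul_max_zero_sq_eq_zero {β γ r : ℝ} {q : ℕ} (hβ : 0 ≤ β) (hγ : 0 ≤ γ)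
    (hβγ : 0 < β + γ) (h : (β + γ * max 0 r ^ q) * max 0 r ^ 2 = 0) : r ≤ 0 := by
  by_contra! hr
  rw [max_eq_right hr.le] at h
  have : 0 < β + γ * r ^ q := by
    rcases hβ.eq_or_lt with hβ0 | hβ0
    · rw [← hβ0, zero_add] at hβγ ⊢
      positivity
    · exact add_pos_of_pos_of_nonneg hβ0 (by positivity)
  exact (mul_pos this (by positivity)).ne' h

section LieDerivative

variable {n m k : ℕ} (θ : (Fin n → ℝ) → ℝ) (h : Fin m → (Fin n → ℝ) → ℝ)
  (g : Fin k → (Fin n → ℝ) → ℝ) (R1 : (Fin n → ℝ) → Matrix (Fin n) (Fin n) ℝ)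
  (R2 : (Fin n → ℝ) → Matrix (Fin k) (Fin k) ℝ) (a b c : Fin k → (Fin n → ℝ) → ℝ)
  (p : Fin k → ℕ) (y : Fin n → ℝ)

def matM : Matrix (Fin n) (Fin n) ℝ := matH h y - (matP h g y)ᵀ * matQ h g y * matP h g y

theorem matM_transpose : (matM h g y)ᵀ = matM h g y := by
  rw [matM, transpose_sub, matH_transpose, transpose_mul, transpose_mul, transpose_transpose,
    matQ_transpose, Matrix.mul_assoc]

theorem grad_dotProduct_vecF :
    grad θ y ⬝ᵥ vecF θ h g R1 R2 a b c p y =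
      -((matM h g y *ᵥ grad θ y) ⬝ᵥ (R1 y *ᵥ (matM h g y *ᵥ grad θ y)))
      - (fun j => g j y * vecv θ h g y j) ⬝ᵥ (R2 y *ᵥ fun j => g j y * vecv θ h g y j)
      + ∑ j, a j y * (g j y * vecv θ h g y j ^ 2)
      - ∑ j, (b j y + c j y * max 0 (vecv θ h g y j) ^ (2 * p j)) *
          max 0 (vecv θ h g y j) ^ 2 := by
  set u := grad θ y
  set v := vecv θ h g y
  have hP : ∀ w, u ⬝ᵥ ((matP h g y)ᵀ *ᵥ w) = v ⬝ᵥ w := fun w => by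
    rw [dotProduct_mulVec, vecMul_transpose]; rfl
  have hD : ∀ (d w : Fin k → ℝ), diagonal d *ᵥ w = fun j => d j * w j := fun d w => by
    ext j; exact mulVec_diagonal d w j
  have T1 : u ⬝ᵥ ((matM h g y * R1 y * matM h g y) *ᵥ u) =
      (matM h g y *ᵥ u) ⬝ᵥ (R1 y *ᵥ (matM h g y *ᵥ u)) := by
    rw [← mulVec_mulVec, ← mulVec_mulVec, dotProduct_mulVec, ← mulVec_transpose, matM_transpose]
  have T2 : u ⬝ᵥ (((matP h g y)ᵀ * diagonal (fun j => g j y) *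
      (R2 y * diagonal (fun j => g j y) - diagonal (fun j => a j y))) *ᵥ v) =
      (fun j => g j y * v j) ⬝ᵥ (R2 y *ᵥ fun j => g j y * v j)
        - ∑ j, a j y * (g j y * v j ^ 2) := by
    rw [← mulVec_mulVec, ← mulVec_mulVec, hP, dotProduct_mulVec, ← mulVec_transpose,
      diagonal_transpose, hD, sub_mulVec, dotProduct_sub, ← mulVec_mulVec, hD, hD]
    congr 1
    refine Finset.sum_congr rfl fun j _ => ?_
    ring
  have T3 : u ⬝ᵥ (((matP h g y)ᵀ * matR3 b c p y v) *ᵥ pPart v) =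
      ∑ j, (b j y + c j y * max 0 (v j) ^ (2 * p j)) * max 0 (v j) ^ 2 := by
    rw [← mulVec_mulVec, hP, matR3, hD, dotProduct]
    refine Finset.sum_congr rfl fun j _ => ?_
    rcases le_total (v j) 0 with hv | hv <;> simp [pPart, hv, sq, mul_left_comm]
  rw [vecF, dotProduct_sub, dotProduct_sub, dotProduct_neg, ← matM, T1, T2, T3]
  ring

variable {θ h g R1 R2 a b c p y}

theorem grad_dotProduct_vecF_nonpos (hy : y ∈ feas h g) (hR1 : (R1 y).PosSemidef)
    (hR2 : (R2 y).PosSemidef) (ha : ∀ j, 0 ≤ a j y) (hb : ∀ j, 0 ≤ b j y)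
    (hc : ∀ j, 0 ≤ c j y) :
    grad θ y ⬝ᵥ vecF θ h g R1 R2 a b c p y ≤ 0 := by
  have q1 := hR1.dotProduct_mulVec_nonneg (matM h g y *ᵥ grad θ y)
  have q2 := hR2.dotProduct_mulVec_nonneg fun j => g j y * vecv θ h g y j
  have q3 : ∑ j, a j y * (g j y * vecv θ h g y j ^ 2) ≤ 0 :=
    Finset.sum_nonpos fun j _ =>
      mul_nonpos_of_nonneg_of_nonpos (ha j) (mul_nonpos_of_nonpos_of_nonneg (hy.2 j) (sq_nonneg _))
  have q4 : 0 ≤ ∑ j, (b j y + c j y * max 0 (vecv θ h g y j) ^ (2 * p j)) *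
      max 0 (vecv θ h g y j) ^ 2 :=
    Finset.sum_nonneg fun j _ =>
      mul_nonneg (add_nonneg (hb j) (mul_nonneg (hc j) (by positivity))) (sq_nonneg _)
  simp only [star_trivial] at q1 q2
  linarith [grad_dotProduct_vecF θ h g R1 R2 a b c p y]

theorem kkt_conditions_of_grad_dotProduct_vecF_eq_zero (hy : y ∈ feas h g)
    (hR1 : (R1 y).PosDef) (hR2 : (R2 y).PosSemidef) (ha : ∀ j, 0 ≤ a j y)
    (hb : ∀ j, 0 ≤ b j y) (hc : ∀ j, 0 ≤ c j y) (hbc : ∀ j, 0 < b j y + c j y)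
    (hpd : (R2 y).PosDef ∨ (diagonal fun j => a j y).PosDef)
    (hzero : grad θ y ⬝ᵥ vecF θ h g R1 R2 a b c p y = 0) :
    matM h g y *ᵥ grad θ y = 0 ∧ (∀ j, vecv θ h g y j ≤ 0) ∧
      ∀ j, g j y * vecv θ h g y j = 0 := by
  set v := vecv θ h g y
  have q1 := hR1.posSemidef.dotProduct_mulVec_nonneg (matM h g y *ᵥ grad θ y)
  have q2 := hR2.dotProduct_mulVec_nonneg fun j => g j y * v j
  have hq3 : ∀ j ∈ Finset.univ, a j y * (g j y * v j ^ 2) ≤ 0 := fun j _ =>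
    mul_nonpos_of_nonneg_of_nonpos (ha j) (mul_nonpos_of_nonpos_of_nonneg (hy.2 j) (sq_nonneg _))
  have hq4 : ∀ j ∈ Finset.univ, 0 ≤ (b j y + c j y * max 0 (v j) ^ (2 * p j)) * max 0 (v j) ^ 2 :=
    fun j _ => mul_nonneg (add_nonneg (hb j) (mul_nonneg (hc j) (by positivity))) (sq_nonneg _)
  have q3 := Finset.sum_nonpos hq3
  have q4 := Finset.sum_nonneg hq4
  have hsum := grad_dotProduct_vecF θ h g R1 R2 a b c p y
  simp only [star_trivial] at q1 q2
  refine ⟨hR1.eq_zero_of_dotProduct_mulVec_self_eq_zero (by linarith), fun j => ?_, ?_⟩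
  · exact nonpos_of_mul_max_zero_sq_eq_zero (hb j) (hc j) (hbc j)
      ((Finset.sum_eq_zero_iff_of_nonneg hq4).1 (by linarith) j (Finset.mem_univ j))
  rcases hpd with hR2 | ha
  · exact congrFun (hR2.eq_zero_of_dotProduct_mulVec_self_eq_zero (by linarith))
  · intro j
    have haj : 0 < a j y := posDef_diagonal_iff.1 ha j
    have hgv2 : g j y * v j ^ 2 = 0 := (mul_eq_zero.1 <|
      (Finset.sum_eq_zero_iff_of_nonpos hq3).1 (by linarith) j (Finset.mem_univ j)).resolve_left
        haj.ne'
    rcases mul_eq_zero.1 hgv2 with hg | hv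
    · rw [hg, zero_mul]
    · rw [pow_eq_zero_iff two_ne_zero |>.1 hv, mul_zero]

theorem mem_KKTset_of_kkt_conditions (hy : y ∈ feas h g)
    (hli : LinearIndependent ℝ (Sum.elim (fun i : Fin m => grad (h i) y)
      (fun j : {j : Fin k // g j y = 0} => grad (g j) y)))
    (hM : matM h g y *ᵥ grad θ y = 0) (hv : ∀ j, vecv θ h g y j ≤ 0)
    (hgv : ∀ j, g j y * vecv θ h g y j = 0) : y ∈ KKTset θ h g := by
  set u := grad θ y
  set v := vecv θ h g y
  have hQ : IsUnit (matQ h g y).det := isUnit_iff_ne_zero.2 (matQ_posDef hli hy).det_pos.ne'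
  have hPQ : (matP h g y)ᵀ * matQ h g y = matH h y * (matB g y)ᵀ := by
    rw [matP, transpose_mul, transpose_mul, matH_transpose, transpose_nonsing_inv,
      matQ_transpose, Matrix.mul_assoc, Matrix.mul_assoc, nonsing_inv_mul _ hQ, Matrix.mul_one]
  have hH : matH h y *ᵥ (u - (matB g y)ᵀ *ᵥ v) = 0 := by
    rw [matM, sub_mulVec, sub_eq_zero, hPQ] at hM
    rw [mulVec_sub, hM, ← mulVec_mulVec, ← mulVec_mulVec]
    exact sub_self _
  set w := (matA h y * (matA h y)ᵀ)⁻¹ *ᵥ (matA h y *ᵥ (u - (matB g y)ᵀ *ᵥ v))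
  have hstat : u - (matB g y)ᵀ *ᵥ v = (matA h y)ᵀ *ᵥ w := by
    rw [← sub_eq_zero, ← Matrix.one_sub_transpose_mul_inv_mul_mulVec]
    exact hH
  refine ⟨hy, -w, -v, fun j => neg_nonneg.2 (hv j), ?_, ?_⟩
  · rw [← matA_transpose_mulVec, ← matB_transpose_mulVec, mulVec_neg, mulVec_neg, ← hstat]
    abel
  · exact Finset.sum_eq_zero fun j _ => by
      rw [Pi.neg_apply, neg_mul, mul_comm, hgv, neg_zero]

end LieDerivative

@[fun_prop]
theorem ContinuousAt.matrix_inv {X ι : Type*} [TopologicalSpace X] [Fintype ι] [DecidableEq ι]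
    {A : X → Matrix ι ι ℝ} {x : X} (hA : ContinuousAt A x) (hdet : (A x).det ≠ 0) :
    ContinuousAt (fun z => (A z)⁻¹) x :=
  (continuousAt_matrix_inv _ (by rw [Ring.inverse_eq_inv']; exact continuousAt_inv₀ hdet)).comp hA

section Continuity

variable {n m k : ℕ} {θ : (Fin n → ℝ) → ℝ} {h : Fin m → (Fin n → ℝ) → ℝ}
  {g : Fin k → (Fin n → ℝ) → ℝ} {R1 : (Fin n → ℝ) → Matrix (Fin n) (Fin n) ℝ}
  {R2 : (Fin n → ℝ) → Matrix (Fin k) (Fin k) ℝ} {a b c : Fin k → (Fin n → ℝ) → ℝ}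
  {y : Fin n → ℝ}

theorem continuous_matA (hh : ∀ i, ContDiff ℝ 1 (h i)) : Continuous (matA h) :=
  continuous_pi fun i => continuous_grad (hh i)

theorem continuous_matB (hg : ∀ j, ContDiff ℝ 1 (g j)) : Continuous (matB g) :=
  continuous_pi fun j => continuous_grad (hg j)

theorem continuousAt_matH (hh : ∀ i, ContDiff ℝ 1 (h i))
    (hdA : (matA h y * (matA h y)ᵀ).det ≠ 0) : ContinuousAt (matH h) y := by
  have := (continuous_matA hh).continuousAt (x := y)
  unfold matH
  fun_prop (disch := assumption)

theorem continuousAt_vecF (p : Fin k → ℕ) (hθ : ContDiff ℝ 1 θ) (hh : ∀ i, ContDiff ℝ 1 (h i))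
    (hg : ∀ j, ContDiff ℝ 1 (g j)) (hR1 : Continuous R1) (hR2 : Continuous R2)
    (ha : ∀ j, Continuous (a j)) (hb : ∀ j, Continuous (b j)) (hc : ∀ j, Continuous (c j))
    (hy : y ∈ feas h g)
    (hli : LinearIndependent ℝ (Sum.elim (fun i : Fin m => grad (h i) y)
      (fun j : {j : Fin k // g j y = 0} => grad (g j) y))) :
    ContinuousAt (vecF θ h g R1 R2 a b c p) y := by
  have hdA := (isUnit_det_matA_mul_transpose hli).ne_zero
  have hdQ := (matQ_posDef hli hy).det_pos.ne'
  have hB := continuous_matB hg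
  have hH := continuousAt_matH hh hdA
  have hu := continuous_grad hθ
  have hg' : ∀ j, Continuous (g j) := fun j => (hg j).continuous
  have hQ : ContinuousAt (matQ h g) y := by
    unfold matQ
    fun_prop
  have hP : ContinuousAt (matP h g) y := by
    unfold matP
    fun_prop (disch := assumption)
  have hv : ContinuousAt (vecv θ h g) y := by
    unfold vecv
    fun_prop
  have hvj : ∀ j, ContinuousAt (fun z => vecv θ h g z j) y := fun j =>
    (continuous_apply j).continuousAt.comp hv
  unfold vecF matR3 pPart
  fun_prop

theorem isClosed_feas (hh : ∀ i, Continuous (h i)) (hg : ∀ j, Continuous (g j)) :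
    IsClosed (feas h g) := by
  simp only [feas, ofPred_and, ofPred_forall]
  exact (isClosed_iInter fun i => isClosed_eq (hh i) continuous_const).inter
    (isClosed_iInter fun j => isClosed_le (hg j) continuous_const)

end Continuity

section Trajectory

open scoped NNReal Topology

theorem exists_tendsto_of_antitoneOn_Ici {f : ℝ → ℝ} {a : ℝ} (hf : AntitoneOn f (Ici a))
    (hbdd : BddBelow (f '' Ici a)) : ∃ l, Tendsto f atTop (𝓝 l) := by
  have hanti : Antitone fun t => f (max t a) := fun s t hst =>
    hf (le_max_right s a) (le_max_right t a) (max_le_max hst le_rfl)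
  obtain ⟨C, hC⟩ := hbdd
  refine ⟨_, (tendsto_atTop_ciInf hanti ⟨C, forall_mem_range.2 fun t =>
    hC (mem_image_of_mem f (le_max_right t a))⟩).congr' ?_⟩
  filter_upwards [eventually_ge_atTop a] with t ht
  rw [max_eq_left ht]

theorem exists_lipschitzOnWith_of_hasDerivAt {E : Type*} [NormedAddCommGroup E]
    [NormedSpace ℝ E] {x : ℝ → E} {F : E → E} {K : Set E} (hK : IsCompact K)
    (hF : ContinuousOn F K) (hxK : ∀ t, 0 ≤ t → x t ∈ K)
    (hx : ∀ t, 0 ≤ t → HasDerivAt x (F (x t)) t) : ∃ C, LipschitzOnWith C x (Ici 0) := by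
  obtain ⟨C, hC⟩ := (hK.image_of_continuousOn (continuous_nnnorm.comp_continuousOn hF)).bddAbove
  exact ⟨C, (convex_Ici 0).lipschitzOnWith_of_nnnorm_hasDerivWithin_le
    (fun t ht => (hx t ht).hasDerivWithinAt) fun t ht => hC ⟨x t, hxK t ht, rfl⟩⟩

theorem nonneg_of_tendsto_of_hasDerivAt {E : Type*} [PseudoMetricSpace E] {x : ℝ → E}
    {φ : ℝ → ℝ} {V : E → ℝ} {C : ℝ≥0} {l : ℝ} {y : E} {ts : ℕ → ℝ}
    (hx : LipschitzOnWith C x (Ici 0)) (hφ : ∀ t, 0 ≤ t → HasDerivAt φ (V (x t)) t)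
    (hφl : Tendsto φ atTop (𝓝 l)) (hV : ContinuousAt V y) (hts : Tendsto ts atTop atTop)
    (hxy : Tendsto (fun i => x (ts i)) atTop (𝓝 y)) : 0 ≤ V y := by
  by_contra! hVy
  obtain ⟨η, hη, hball⟩ := Metric.eventually_nhds_iff.1
    (hV.eventually (gt_mem_nhds (show V y < V y / 2 by linarith)))
  set ε := η / (2 * (C + 1))
  have hε : 0 < ε := by positivity
  have hCε : C * ε ≤ η / 2 := by
    rw [mul_div_assoc', div_le_div_iff₀ (by positivity) two_pos]
    nlinarith [C.coe_nonneg]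
  have hdrop : ∀ᶠ i in atTop, φ (ts i + ε) - φ (ts i) ≤ V y / 2 * ε := by
    filter_upwards [hts.eventually_ge_atTop 0, hxy (Metric.ball_mem_nhds y (half_pos hη))]
      with i hi0 hiy
    have hφ' : ∀ s ∈ Icc (ts i) (ts i + ε), HasDerivAt φ (V (x s)) s := fun s hs =>
      hφ s (hi0.trans hs.1)
    have hVs : ∀ s ∈ Icc (ts i) (ts i + ε), V (x s) < V y / 2 := fun s hs => hball <| by
      calc dist (x s) y ≤ dist (x s) (x (ts i)) + dist (x (ts i)) y := dist_triangle _ _ _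
        _ < C * ε + η / 2 := by
          refine add_lt_add_of_le_of_lt
            ((hx.dist_le_mul s (hi0.trans hs.1) (ts i) hi0).trans ?_) hiy
          rw [Real.dist_eq, abs_of_nonneg (by linarith [hs.1])]
          exact mul_le_mul_of_nonneg_left (by linarith [hs.2]) C.coe_nonneg
        _ ≤ η := by linarith
    have := (convex_Icc (ts i) (ts i + ε)).image_sub_le_mul_sub_of_deriv_le
      (fun s hs => (hφ' s hs).continuousAt.continuousWithinAt)
      (fun s hs => (hφ' s (interior_subset hs)).differentiableAt.differentiableWithinAt)
      (fun s hs => (hφ' s (interior_subset hs)).deriv.le.trans (hVs s (interior_subset hs)).le)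
      (ts i) (left_mem_Icc.2 (by linarith)) (ts i + ε) (right_mem_Icc.2 (by linarith))
      (by linarith)
    rwa [add_sub_cancel_left] at this
  have hlim : Tendsto (fun i => φ (ts i + ε) - φ (ts i)) atTop (𝓝 0) := by
    simpa using (hφl.comp (tendsto_atTop_add_const_right _ ε hts)).sub (hφl.comp hts)
  nlinarith [le_of_tendsto hlim hdrop]

theorem trajectory_limit_points_of_lyapunov {E : Type*} [NormedAddCommGroup E] [NormedSpace ℝ E]
    {S : Set E} {θ V : E → ℝ} {F : E → E} {x : ℝ → E} (hS : IsClosed S) (hθ : Continuous θ)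
    (hK : IsCompact {z ∈ S | θ z ≤ θ (x 0)}) (hF : ∀ z ∈ S, ContinuousAt F z)
    (hV : ∀ z ∈ S, ContinuousAt V z) (hV0 : ∀ z ∈ S, V z ≤ 0) (hxS : ∀ t, 0 ≤ t → x t ∈ S)
    (hx : ∀ t, 0 ≤ t → HasDerivAt x (F (x t)) t)
    (hθx : ∀ t, 0 ≤ t → HasDerivAt (fun s => θ (x s)) (V (x t)) t) :
    AntitoneOn (fun t => θ (x t)) (Ici 0) ∧ Bornology.IsBounded (x '' Ici 0) ∧
      ∃ l, Tendsto (fun t => θ (x t)) atTop (𝓝 l) ∧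
        ∀ y, (∃ ts : ℕ → ℝ, Tendsto ts atTop atTop ∧ Tendsto (fun i => x (ts i)) atTop (𝓝 y)) →
          y ∈ S ∧ V y = 0 ∧ θ y = l := by
  have hanti : AntitoneOn (fun t => θ (x t)) (Ici 0) :=
    antitoneOn_of_hasDerivWithinAt_nonpos (convex_Ici 0)
      (fun t ht => (hθx t ht).continuousAt.continuousWithinAt)
      (fun t ht => (hθx t (interior_subset ht)).hasDerivWithinAt)
      fun t ht => hV0 _ (hxS t (interior_subset ht))
  have hxK : ∀ t, 0 ≤ t → x t ∈ {z ∈ S | θ z ≤ θ (x 0)} := fun t ht =>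
    ⟨hxS t ht, hanti self_mem_Ici ht ht⟩
  obtain ⟨l, hl⟩ := exists_tendsto_of_antitoneOn_Ici hanti <|
    (hK.bddBelow_image hθ.continuousOn).mono <| by
      rintro _ ⟨t, ht, rfl⟩
      exact mem_image_of_mem θ (hxK t ht)
  obtain ⟨C, hC⟩ := exists_lipschitzOnWith_of_hasDerivAt hK
    (fun z hz => (hF z hz.1).continuousWithinAt) hxK hx
  refine ⟨hanti, hK.isBounded.subset (image_subset_iff.2 hxK), l, hl, ?_⟩
  rintro y ⟨ts, hts, hxy⟩
  have hy : y ∈ S :=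
    hS.mem_of_tendsto hxy ((hts.eventually_ge_atTop 0).mono fun i hi => hxS _ hi)
  exact ⟨hy, le_antisymm (hV0 y hy) (nonneg_of_tendsto_of_hasDerivAt hC hθx hl (hV y hy) hts hxy),
    tendsto_nhds_unique ((hθ.tendsto y).comp hxy) (hl.comp hts)⟩

end Trajectory

theorem stmt_18_general
    {n m k : ℕ}
    (θ : (Fin n → ℝ) → ℝ) (h : Fin m → (Fin n → ℝ) → ℝ) (g : Fin k → (Fin n → ℝ) → ℝ)
    (hθ : ContDiff ℝ 2 θ) (hhC : ∀ i, ContDiff ℝ 2 (h i)) (hgC : ∀ j, ContDiff ℝ 2 (g j))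
    (hH1 : hypH1 θ h g) (hH2 : hypH2 h g)
    (R1 : (Fin n → ℝ) → Matrix (Fin n) (Fin n) ℝ)
    (R2 : (Fin n → ℝ) → Matrix (Fin k) (Fin k) ℝ)
    (a b c : Fin k → (Fin n → ℝ) → ℝ) (p : Fin k → ℕ)
    (hR1C : ∀ i j, ContDiff ℝ 1 fun x => R1 x i j)
    (hR1pd : ∀ x, (R1 x).PosDef)
    (hR2C : ∀ i j, ContDiff ℝ 1 fun x => R2 x i j)
    (hR2psd : ∀ x, (R2 x).PosSemidef)
    (haC : ∀ j, ContDiff ℝ 1 (a j)) (hbC : ∀ j, ContDiff ℝ 1 (b j))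
    (hcC : ∀ j, ContDiff ℝ 1 (c j))
    (ha0 : ∀ j x, 0 ≤ a j x) (hb0 : ∀ j x, 0 ≤ b j x) (hc0 : ∀ j x, 0 ≤ c j x)
    (hbc : ∀ x ∈ feas h g, ∀ j, 0 < b j x + c j x)
    (hpd : ∀ x ∈ feas h g, (R2 x).PosDef ∨ (Matrix.diagonal fun j => a j x).PosDef)
    (x : ℝ → (Fin n → ℝ))
    (hxS : ∀ t : ℝ, 0 ≤ t → x t ∈ feas h g)
    (hode : ∀ t : ℝ, 0 ≤ t → HasDerivAt x (vecF θ h g R1 R2 a b c p (x t)) t) :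
    AntitoneOn (fun t => θ (x t)) (Set.Ici (0 : ℝ)) ∧
    Bornology.IsBounded (x '' Set.Ici (0 : ℝ)) ∧
    ∃ l : ℝ, Filter.Tendsto (fun t => θ (x t)) Filter.atTop (nhds l) ∧
      ∀ y : Fin n → ℝ,
        (∃ t : ℕ → ℝ, Filter.Tendsto t Filter.atTop Filter.atTop ∧
          Filter.Tendsto (fun i => x (t i)) Filter.atTop (nhds y)) →
        y ∈ KKTset θ h g ∧ θ y = l := by
  have hθ1 : ContDiff ℝ 1 θ := hθ.of_le one_le_two
  have hF : ∀ z ∈ feas h g, ContinuousAt (vecF θ h g R1 R2 a b c p) z := fun z hz =>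
    continuousAt_vecF p hθ1 (fun i => (hhC i).of_le one_le_two) (fun j => (hgC j).of_le one_le_two)
      (continuous_matrix fun i j => (hR1C i j).continuous)
      (continuous_matrix fun i j => (hR2C i j).continuous) (fun j => (haC j).continuous)
      (fun j => (hbC j).continuous) (fun j => (hcC j).continuous) hz (hH2 z hz)
  have hV : ∀ z ∈ feas h g, ContinuousAt (fun w => grad θ w ⬝ᵥ vecF θ h g R1 R2 a b c p w) z :=
    fun z hz => by
      have := continuous_grad hθ1
      have := hF z hz
      fun_prop
  obtain ⟨hanti, hbdd, l, hl, hlim⟩ := trajectory_limit_points_of_lyapunov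
    (isClosed_feas (fun i => (hhC i).continuous) fun j => (hgC j).continuous) hθ.continuous
    (hH1.2 _ (hxS 0 le_rfl)) hF hV
    (fun z hz => grad_dotProduct_vecF_nonpos hz (hR1pd z).posSemidef (hR2psd z) (ha0 · z)
      (hb0 · z) (hc0 · z))
    hxS hode fun t ht => (hode t ht).comp_grad (hθ1.differentiable one_ne_zero _)
  refine ⟨hanti, hbdd, l, hl, fun y hy => ?_⟩
  obtain ⟨hyS, hVy, hθy⟩ := hlim y hy
  obtain ⟨hM, hv, hgv⟩ := kkt_conditions_of_grad_dotProduct_vecF_eq_zero hyS (hR1pd y)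
    (hR2psd y) (ha0 · y) (hb0 · y) (hc0 · y) (hbc y hyS) (hpd y hyS) hVy
  exact ⟨mem_KKTset_of_kkt_conditions hyS (hH2 y hyS) hM hv hgv, hθy⟩

/-- Trajectory convergence (part of Theorem 2.3): along any solution of `ẋ = F(x)`
staying in `S`, `θ(x(t))` is nonincreasing, the trajectory is bounded, `θ(x(t))`
converges to some `l`, and every accumulation point of `x(t)` as `t → ∞` lies in
`Φ ∩ {x ∈ S : θ(x) = l}`. -/
theorem stmt_18
    {n m k : ℕ} (hmn : m < n)
    (θ : (Fin n → ℝ) → ℝ) (h : Fin m → (Fin n → ℝ) → ℝ) (g : Fin k → (Fin n → ℝ) → ℝ)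
    (hθ : ContDiff ℝ 2 θ) (hhC : ∀ i, ContDiff ℝ 2 (h i)) (hgC : ∀ j, ContDiff ℝ 2 (g j))
    (hH1 : hypH1 θ h g) (hH2 : hypH2 h g)
    (R1 : (Fin n → ℝ) → Matrix (Fin n) (Fin n) ℝ)
    (R2 : (Fin n → ℝ) → Matrix (Fin k) (Fin k) ℝ)
    (a b c : Fin k → (Fin n → ℝ) → ℝ) (p : Fin k → ℕ)
    (hR1C : ∀ i j, ContDiff ℝ 1 fun x => R1 x i j)
    (hR1pd : ∀ x, (R1 x).PosDef)
    (hR2C : ∀ i j, ContDiff ℝ 1 fun x => R2 x i j)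
    (hR2psd : ∀ x, (R2 x).PosSemidef)
    (haC : ∀ j, ContDiff ℝ 1 (a j)) (hbC : ∀ j, ContDiff ℝ 1 (b j))
    (hcC : ∀ j, ContDiff ℝ 1 (c j))
    (ha0 : ∀ j x, 0 ≤ a j x) (hb0 : ∀ j x, 0 ≤ b j x) (hc0 : ∀ j x, 0 ≤ c j x)
    (hbc : ∀ x ∈ feas h g, ∀ j, 0 < b j x + c j x)
    (hpd : ∀ x ∈ feas h g, (R2 x).PosDef ∨ (Matrix.diagonal fun j => a j x).PosDef)
    (hp : ∀ j, 1 ≤ p j)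
    (x : ℝ → (Fin n → ℝ))
    (hxC1 : ContDiffOn ℝ 1 x (Set.Ici (0 : ℝ)))
    (hxS : ∀ t : ℝ, 0 ≤ t → x t ∈ feas h g)
    (hode : ∀ t : ℝ, 0 ≤ t → HasDerivAt x (vecF θ h g R1 R2 a b c p (x t)) t) :
    AntitoneOn (fun t => θ (x t)) (Set.Ici (0 : ℝ)) ∧
    Bornology.IsBounded (x '' Set.Ici (0 : ℝ)) ∧
    ∃ l : ℝ, Filter.Tendsto (fun t => θ (x t)) Filter.atTop (nhds l) ∧
      ∀ y : Fin n → ℝ,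
        (∃ t : ℕ → ℝ, Filter.Tendsto t Filter.atTop Filter.atTop ∧
          Filter.Tendsto (fun i => x (t i)) Filter.atTop (nhds y)) →
        y ∈ KKTset θ h g ∧ θ y = l :=
  stmt_18_general θ h g hθ hhC hgC hH1 hH2 R1 R2 a b c p hR1C hR1pd hR2C hR2psd haC hbC hcC ha0 hb0
    hc0 hbc hpd x hxS hode

end
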